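/- Let (X,d,μ) be a metric measure space with μ Borel regular and doubling, admitting a p-Poincaré inequality with constant L ≥ 1 for some p ≥ 1. Then there is a constant C < ∞, depending only on the doubling constant, L and p, such that for all p₀, q₀ ∈ X with r = d(p₀,q₀) > 0 and every ε > 0, there exists an ε-path x₀, x₁, …, x_k in X with x₀ ∈ B(p₀, r/4), x_k ∈ B(q₀, r/4), and total length Σ_{i=1}^{k} d(x_{i−1}, x_i) ≤ C·d(p₀,q₀). -/

import Mathlib

open Metric MeasureTheory Filter Set
open scoped NNReal ENNReal

/-- The variation of `f` on the ball `B(x,r)`: `sup { |f y - f x| / r : y ∈ B(x,r) }`. -/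
noncomputable def varBall {X : Type*} [MetricSpace X] (f : X → ℝ) (x : X) (r : ℝ) : ℝ :=
  sSup ((fun y => |f y - f x| / r) '' Metric.ball x r)

/-- Lower pointwise Lipschitz constant `lip_x f`. -/
noncomputable def lipLow {X : Type*} [MetricSpace X] (f : X → ℝ) (x : X) : ℝ :=
  Filter.liminf (fun r => varBall f x r) (nhdsWithin 0 (Set.Ioi (0:ℝ)))

/-- Upper pointwise Lipschitz constant `Lip_x f`. -/
noncomputable def lipUp {X : Type*} [MetricSpace X] (f : X → ℝ) (x : X) : ℝ :=
  Filter.limsup (fun r => varBall f x r) (nhdsWithin 0 (Set.Ioi (0:ℝ)))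

/-- `f` is a real-valued Lipschitz function. -/
def IsLip {X : Type*} [MetricSpace X] (f : X → ℝ) : Prop := ∃ K : ℝ≥0, LipschitzWith K f

/-- `μ` is doubling with constant `C`. -/
def DoublingWith {X : Type*} [MetricSpace X] [MeasurableSpace X] (μ : Measure X) (C : ℝ≥0) :
    Prop :=
  ∀ (x : X) (r : ℝ), 0 < r → μ (Metric.ball x (2 * r)) ≤ (C : ℝ≥0∞) * μ (Metric.ball x r)

/-- `(X, μ)` admits a `p`-Poincaré inequality with constant `L`. -/
def PoincareIneq {X : Type*} [MetricSpace X] [MeasurableSpace X] (μ : Measure X) (p L : ℝ) :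
    Prop :=
  (∀ (x : X) (r : ℝ), 0 < r → 0 < μ (Metric.ball x r) ∧ μ (Metric.ball x r) < ⊤) ∧
  ∀ f : X → ℝ, IsLip f → ∀ (x : X) (r : ℝ), 0 < r →
    ⨍ y in Metric.ball x r, |f y - ⨍ z in Metric.ball x r, f z ∂μ| ∂μ ≤
      L * r * (⨍ z in Metric.ball x (L * r), (lipLow f z) ^ p ∂μ) ^ (1 / p)

/-- An `N`-tuple of functions is dependent to first order at `x`. -/
def DependentAt {X : Type*} [MetricSpace X] {N : ℕ} (f : Fin N → X → ℝ) (x : X) : Prop :=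
  ∃ l : Fin N → ℝ, l ≠ 0 ∧ lipUp (fun y => ∑ i, l i * f i y) x = 0

/-- A measurable differentiable structure of dimension at most `N₀`. -/
def HasMDS {X : Type*} [MetricSpace X] [MeasurableSpace X] (μ : Measure X) (N₀ : ℕ) : Prop :=
  ∃ (ι : Type) (_ : Countable ι) (U : ι → Set X) (N : ι → ℕ)
      (φ : (i : ι) → Fin (N i) → X → ℝ),
    (∀ i, MeasurableSet (U i) ∧ 0 < μ (U i)) ∧
    μ (Set.univ \ ⋃ i, U i) = 0 ∧
    (∀ i, N i ≤ N₀) ∧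
    (∀ i k, IsLip (φ i k)) ∧
    (∀ f : X → ℝ, IsLip f → ∀ i, ∃ df : X → (Fin (N i) → ℝ),
      Measurable df ∧
      (∀ᵐ x ∂(μ.restrict (U i)),
        lipUp (fun y => f y - ∑ k, df x k * φ i k y) x = 0) ∧
      ∀ dg : X → (Fin (N i) → ℝ), Measurable dg →
        (∀ᵐ x ∂(μ.restrict (U i)),
          lipUp (fun y => f y - ∑ k, dg x k * φ i k y) x = 0) →
        (∀ᵐ x ∂(μ.restrict (U i)), df x = dg x))

/-! Let `u x` be the infimum of the lengths of `ε`-paths from `B(p₀, r/4)` to `x`, truncated at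
`M = C r`. It vanishes on `B(p₀, r/4)`, it is `1`-Lipschitz at scales below `ε` (so `lip u ≤ 1`),
and, being bounded, it is globally Lipschitz. If no `ε`-path of length `< M` reached `B(q₀, r/4)`,
then `u = M` there, and the Poincaré inequality on `B(p₀, 2r)` would force `M ≤ 2 L C_μ⁴ r`:
the mean oscillation of `u` on `B(p₀, 2r)` is at least `M / C_μ⁴`, because by doubling each quarter
ball carries a `C_μ⁻⁴`-fraction of the measure of `B(p₀, 2r)`. -/

open scoped Topology

section Variation

variable {X : Type*} [MetricSpace X]

lemma varBall_nonneg (f : X → ℝ) (x : X) (r : ℝ) : 0 ≤ varBall f x r := by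
  refine Real.sSup_nonneg ?_
  rintro _ ⟨y, hy, rfl⟩
  exact div_nonneg (abs_nonneg _) (dist_nonneg.trans (mem_ball.1 hy).le)

lemma varBall_le_of_dist_le_mul {f : X → ℝ} {x : X} {r K : ℝ} (hK : 0 ≤ K)
    (h : ∀ y ∈ ball x r, dist (f x) (f y) ≤ K * dist x y) : varBall f x r ≤ K := by
  refine Real.sSup_le ?_ hK
  rintro _ ⟨y, hy, rfl⟩
  have hr : 0 < r := dist_nonneg.trans_lt hy
  rw [div_le_iff₀ hr, ← Real.dist_eq, dist_comm]
  calc dist (f x) (f y) ≤ K * dist x y := h y hy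
    _ ≤ K * r := by rw [dist_comm]; exact mul_le_mul_of_nonneg_left (mem_ball.1 hy).le hK

lemma lipLow_nonneg (f : X → ℝ) (x : X) : 0 ≤ lipLow f x := by
  rw [lipLow, liminf_eq]
  exact Real.sSup_nonneg' ⟨0, Eventually.of_forall (f := 𝓝[>] 0) (varBall_nonneg f x), le_rfl⟩

lemma lipLow_le_of_dist_le_mul {f : X → ℝ} {x : X} {ε K : ℝ} (hε : 0 < ε) (hK : 0 ≤ K)
    (h : ∀ y, dist x y < ε → dist (f x) (f y) ≤ K * dist x y) : lipLow f x ≤ K := by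
  rw [lipLow, liminf_eq]
  refine Real.sSup_le (fun a (ha : ∀ᶠ r in 𝓝[>] 0, a ≤ varBall f x r) => ?_) hK
  obtain ⟨r, har, hr⟩ := (Eventually.and ha (Ioo_mem_nhdsGT hε)).exists
  exact har.trans <| varBall_le_of_dist_le_mul hK fun y hy =>
    h y ((mem_ball'.1 hy).trans hr.2)

end Variation

lemma lipschitzWith_of_dist_le_of_dist_lt {α β : Type*} [PseudoMetricSpace α]
    [PseudoMetricSpace β] {f : α → β} {ε M : ℝ} (hε : 0 < ε)
    (hloc : ∀ x y, dist x y < ε → dist (f x) (f y) ≤ dist x y)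
    (hbdd : ∀ x y, dist (f x) (f y) ≤ M) :
    LipschitzWith (max 1 (M / ε)).toNNReal f := by
  refine LipschitzWith.of_dist_le' fun x y => ?_
  rcases lt_or_ge (dist x y) ε with hxy | hxy
  · exact (hloc x y hxy).trans (le_mul_of_one_le_left dist_nonneg (le_max_left _ _))
  · calc dist (f x) (f y) ≤ M / ε * ε := by rw [div_mul_cancel₀ _ hε.ne']; exact hbdd x y
      _ ≤ max 1 (M / ε) * dist x y :=
        mul_le_mul (le_max_right _ _) hxy hε.le ((zero_le_one).trans (le_max_left _ _))

section EpsPath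

variable {X : Type*} [MetricSpace X]

def IsEpsPath (ε : ℝ) {k : ℕ} (pts : Fin (k + 1) → X) : Prop :=
  ∀ i : Fin k, dist (pts i.castSucc) (pts i.succ) < ε

def pathLength {k : ℕ} (pts : Fin (k + 1) → X) : ℝ :=
  ∑ i : Fin k, dist (pts i.castSucc) (pts i.succ)

lemma pathLength_nonneg {k : ℕ} (pts : Fin (k + 1) → X) : 0 ≤ pathLength pts :=
  Finset.sum_nonneg fun _ _ => dist_nonneg

lemma pathLength_snoc {k : ℕ} (pts : Fin (k + 1) → X) (y : X) :
    pathLength (Fin.snoc pts y : Fin (k + 2) → X) = pathLength pts + dist (pts (Fin.last k)) y := by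
  simp only [pathLength, Fin.sum_univ_castSucc (n := k), Fin.succ_castSucc, Fin.snoc_castSucc,
    Fin.succ_last, Fin.snoc_last]

lemma IsEpsPath.snoc {ε : ℝ} {k : ℕ} {pts : Fin (k + 1) → X} (h : IsEpsPath ε pts) {y : X}
    (hy : dist (pts (Fin.last k)) y < ε) : IsEpsPath ε (Fin.snoc pts y : Fin (k + 2) → X) := by
  intro i
  induction i using Fin.lastCases with
  | last => simpa only [Fin.succ_last, Fin.snoc_last, Fin.snoc_castSucc] using hy
  | cast j => simpa only [Fin.succ_castSucc, Fin.snoc_castSucc] using h j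

def epsPathLengths (ε : ℝ) (A : Set X) (x : X) : Set ℝ :=
  {l | ∃ (k : ℕ) (pts : Fin (k + 1) → X), pts 0 ∈ A ∧ pts (Fin.last k) = x ∧
    IsEpsPath ε pts ∧ pathLength pts = l}

lemma zero_mem_epsPathLengths {ε : ℝ} {A : Set X} {x : X} (hx : x ∈ A) :
    0 ∈ epsPathLengths ε A x :=
  ⟨0, fun _ => x, hx, rfl, fun i => i.elim0, by simp [pathLength]⟩

lemma add_dist_mem_epsPathLengths {ε : ℝ} {A : Set X} {x y : X} {l : ℝ}
    (hl : l ∈ epsPathLengths ε A x) (hxy : dist x y < ε) : l + dist x y ∈ epsPathLengths ε A y := by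
  obtain ⟨k, pts, h0, rfl, hpath, rfl⟩ := hl
  refine ⟨k + 1, Fin.snoc pts y, ?_, Fin.snoc_last _ _, hpath.snoc hxy, pathLength_snoc pts y⟩
  simpa only [← Fin.castSucc_zero, Fin.snoc_castSucc] using h0

lemma bddBelow_epsPathLengths (ε : ℝ) (A : Set X) (x : X) (M : ℝ) :
    BddBelow (insert M (epsPathLengths ε A x)) :=
  BddBelow.insert M ⟨0, by rintro _ ⟨k, pts, -, -, -, rfl⟩; exact pathLength_nonneg pts⟩

noncomputable def truncEpsPathDist (ε : ℝ) (A : Set X) (M : ℝ) (x : X) : ℝ :=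
  sInf (insert M (epsPathLengths ε A x))

variable {ε M : ℝ} {A : Set X}

lemma truncEpsPathDist_le (x : X) : truncEpsPathDist ε A M x ≤ M :=
  csInf_le (bddBelow_epsPathLengths ε A x M) (mem_insert _ _)

lemma truncEpsPathDist_nonneg (hM : 0 ≤ M) (x : X) : 0 ≤ truncEpsPathDist ε A M x := by
  refine le_csInf (insert_nonempty _ _) ?_
  rintro _ (rfl | ⟨k, pts, -, -, -, rfl⟩)
  exacts [hM, pathLength_nonneg pts]

lemma truncEpsPathDist_eq_zero (hM : 0 ≤ M) {x : X} (hx : x ∈ A) :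
    truncEpsPathDist ε A M x = 0 :=
  le_antisymm (csInf_le (bddBelow_epsPathLengths ε A x M)
    (mem_insert_of_mem _ (zero_mem_epsPathLengths hx))) (truncEpsPathDist_nonneg hM x)

lemma truncEpsPathDist_le_add_dist {x y : X} (hxy : dist x y < ε) :
    truncEpsPathDist ε A M y ≤ truncEpsPathDist ε A M x + dist x y := by
  rw [← sub_le_iff_le_add]
  refine le_csInf (insert_nonempty _ _) ?_
  rintro l (rfl | hl) <;> rw [sub_le_iff_le_add]
  · exact (truncEpsPathDist_le y).trans (le_add_of_nonneg_right dist_nonneg)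
  · exact csInf_le (bddBelow_epsPathLengths ε A y M)
      (mem_insert_of_mem _ (add_dist_mem_epsPathLengths hl hxy))

lemma dist_truncEpsPathDist_le {x y : X} (hxy : dist x y < ε) :
    dist (truncEpsPathDist ε A M x) (truncEpsPathDist ε A M y) ≤ dist x y := by
  rw [Real.dist_eq, abs_sub_le_iff]
  constructor
  · have := truncEpsPathDist_le_add_dist (A := A) (M := M) ((dist_comm y x).trans_lt hxy)
    rw [dist_comm] at this
    linarith
  · have := truncEpsPathDist_le_add_dist (A := A) (M := M) hxy
    linarith

lemma lipschitzWith_truncEpsPathDist (hε : 0 < ε) (hM : 0 ≤ M) :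
    LipschitzWith (max 1 (M / ε)).toNNReal (truncEpsPathDist ε A M) := by
  refine lipschitzWith_of_dist_le_of_dist_lt hε (fun x y => dist_truncEpsPathDist_le) fun x y => ?_
  have hx := truncEpsPathDist_nonneg (ε := ε) (A := A) hM x
  have hy := truncEpsPathDist_nonneg (ε := ε) (A := A) hM y
  rw [Real.dist_eq, abs_le]
  constructor <;> linarith [truncEpsPathDist_le (ε := ε) (A := A) (M := M) x,
    truncEpsPathDist_le (ε := ε) (A := A) (M := M) y]

lemma lipLow_truncEpsPathDist_le_one (hε : 0 < ε) (x : X) :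
    lipLow (truncEpsPathDist ε A M) x ≤ 1 :=
  lipLow_le_of_dist_le_mul hε zero_le_one fun _ hxy => by
    rw [one_mul]; exact dist_truncEpsPathDist_le hxy

lemma exists_epsPath_of_truncEpsPathDist_lt {x : X} (hx : truncEpsPathDist ε A M x < M) :
    ∃ (k : ℕ) (pts : Fin (k + 1) → X), pts 0 ∈ A ∧ pts (Fin.last k) = x ∧
      IsEpsPath ε pts ∧ pathLength pts < M := by
  obtain ⟨l, hl | ⟨k, pts, h0, hlast, hpath, rfl⟩, hlM⟩ :=
    exists_lt_of_csInf_lt (insert_nonempty _ _) hx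
  · exact absurd hlM (hl ▸ lt_irrefl M)
  · exact ⟨k, pts, h0, hlast, hpath, hlM⟩

end EpsPath

lemma DoublingWith.measure_ball_two_pow_mul_le {X : Type*} [MetricSpace X] [MeasurableSpace X]
    {μ : Measure X} {C : ℝ≥0} (h : DoublingWith μ C) (x : X) {s : ℝ} (hs : 0 < s) (n : ℕ) :
    μ (ball x (2 ^ n * s)) ≤ (C : ℝ≥0∞) ^ n * μ (ball x s) := by
  induction n with
  | zero => simp
  | succ n ih =>
    calc μ (ball x (2 ^ (n + 1) * s)) = μ (ball x (2 * (2 ^ n * s))) := by ring_nf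
      _ ≤ C * μ (ball x (2 ^ n * s)) := h x _ (by positivity)
      _ ≤ C * (C ^ n * μ (ball x s)) := by gcongr
      _ = C ^ (n + 1) * μ (ball x s) := by ring

lemma norm_setAverage_le_of_norm_le_const {α E : Type*} [MeasurableSpace α] {μ : Measure α}
    [NormedAddCommGroup E] [NormedSpace ℝ E] {f : α → E} {s : Set α} {C : ℝ} (hs : μ s < ∞)
    (hC0 : 0 ≤ C) (hC : ∀ x ∈ s, ‖f x‖ ≤ C) : ‖⨍ x in s, f x ∂μ‖ ≤ C := by
  rw [setAverage_eq, norm_smul, norm_inv, Real.norm_of_nonneg measureReal_nonneg]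
  rcases eq_or_ne (μ.real s) 0 with h0 | h0
  · simpa [h0] using hC0
  · rw [inv_mul_le_iff₀ (measureReal_nonneg.lt_of_ne' h0), mul_comm]
    exact norm_setIntegral_le_of_norm_le_const hs hC

lemma abs_sub_le_mul_setAverage_abs_sub {α : Type*} [MeasurableSpace α] {μ : Measure α}
    {u : α → ℝ} {s t B : Set α} {a b c : ℝ} {K : ℝ≥0} (hu : IntegrableOn u B μ)
    (hs : MeasurableSet s) (ht : MeasurableSet t) (hsB : s ⊆ B) (htB : t ⊆ B) (hst : Disjoint s t)
    (hB0 : μ B ≠ 0) (hB : μ B ≠ ∞) (hBs : μ B ≤ K * μ s) (hBt : μ B ≤ K * μ t)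
    (hua : ∀ x ∈ s, u x = a) (hub : ∀ x ∈ t, u x = b) :
    |b - a| ≤ K * ⨍ x in B, |u x - c| ∂μ := by
  have hg : IntegrableOn (fun x => |u x - c|) B μ := (hu.sub (integrableOn_const hB)).abs
  have hreal : ∀ {v}, v ⊆ B → μ B ≤ K * μ v → μ.real B ≤ K * μ.real v := fun hvB hBv => by
    simpa [measureReal_def, ENNReal.toReal_mul] using
      ENNReal.toReal_mono (ENNReal.mul_ne_top ENNReal.coe_ne_top (measure_mono hvB |>.trans_lt
        hB.lt_top).ne) hBv
  have hconst : ∀ {v d}, MeasurableSet v → (∀ x ∈ v, u x = d) →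
      ∫ x in v, |u x - c| ∂μ = |d - c| * μ.real v := fun hv hud => by
    rw [setIntegral_congr_fun hv fun x hx => by rw [hud x hx], setIntegral_const, smul_eq_mul,
      mul_comm]
  have hlower : |b - a| * μ.real B ≤ K * ∫ x in B, |u x - c| ∂μ :=
    calc |b - a| * μ.real B ≤ |a - c| * μ.real B + |b - c| * μ.real B := by
          rw [← add_mul, abs_sub_comm a c, add_comm]; gcongr; exact abs_sub_le b c a
      _ ≤ |a - c| * (K * μ.real s) + |b - c| * (K * μ.real t) := by
          gcongr; exacts [hreal hsB hBs, hreal htB hBt]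
      _ = K * ∫ x in s ∪ t, |u x - c| ∂μ := by
          rw [setIntegral_union hst ht (hg.mono_set hsB) (hg.mono_set htB), hconst hs hua,
            hconst ht hub]
          ring
      _ ≤ K * ∫ x in B, |u x - c| ∂μ := mul_le_mul_of_nonneg_left
          (setIntegral_mono_set hg (Eventually.of_forall fun _ => abs_nonneg _)
            (union_subset hsB htB).eventuallyLE) K.coe_nonneg
  have hBpos : 0 < μ.real B := ENNReal.toReal_pos hB0 hB
  rw [setAverage_eq, smul_eq_mul, ← mul_assoc, mul_comm (K : ℝ), mul_assoc,
    le_inv_mul_iff₀ hBpos, mul_comm]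
  exact hlower

section Poincare

variable {X : Type*} [MetricSpace X] [MeasurableSpace X] {μ : Measure X} {p L : ℝ}

lemma LipschitzWith.integrableOn_ball [OpensMeasurableSpace X] {K : ℝ≥0} {u : X → ℝ}
    (hu : LipschitzWith K u) (x : X) {r : ℝ} (hr : μ (ball x r) ≠ ∞) :
    IntegrableOn u (ball x r) μ := by
  refine Measure.integrableOn_of_bounded (M := |u x| + K * r) hr hu.continuous.aestronglyMeasurable
    (ae_restrict_of_forall_mem measurableSet_ball fun y hy => ?_)
  have hdist : |u y - u x| ≤ K * r := by
    rw [← Real.dist_eq]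
    exact (hu.dist_le_mul y x).trans (mul_le_mul_of_nonneg_left (mem_ball.1 hy).le K.coe_nonneg)
  rw [Real.norm_eq_abs]
  linarith [abs_sub_abs_le_abs_sub (u y) (u x)]

lemma PoincareIneq.setAverage_abs_sub_le_of_lipLow_le_one (hP : PoincareIneq μ p L)
    (hp : 0 ≤ p) (hL : 0 < L) {u : X → ℝ} (hu : IsLip u) (hlip : ∀ z, lipLow u z ≤ 1) (x : X)
    {r : ℝ} (hr : 0 < r) :
    ⨍ y in ball x r, |u y - ⨍ z in ball x r, u z ∂μ| ∂μ ≤ L * r := by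
  have havg : |⨍ z in ball x (L * r), lipLow u z ^ p ∂μ| ≤ 1 :=
    norm_setAverage_le_of_norm_le_const (hP.1 x _ (mul_pos hL hr)).2 zero_le_one fun z _ => by
      rw [Real.norm_of_nonneg (Real.rpow_nonneg (lipLow_nonneg u z) p)]
      exact Real.rpow_le_one (lipLow_nonneg u z) (hlip z) hp
  calc _ ≤ L * r * (⨍ z in ball x (L * r), lipLow u z ^ p ∂μ) ^ (1 / p) := hP.2 u hu x r hr
    _ ≤ L * r * 1 := by
        gcongr
        exact (le_abs_self _).trans <| (Real.abs_rpow_le_abs_rpow _ _).trans <|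
          Real.rpow_le_one (abs_nonneg _) havg (by positivity)
    _ = L * r := mul_one _

theorem PoincareIneq.abs_sub_le_of_lipLow_le_one [OpensMeasurableSpace X] {C : ℝ≥0}
    (hP : PoincareIneq μ p L) (hD : DoublingWith μ C) (hp : 0 ≤ p) (hL : 0 < L) {u : X → ℝ}
    (hu : IsLip u) (hlip : ∀ z, lipLow u z ≤ 1) {x y : X} (hxy : 0 < dist x y) {a b : ℝ}
    (ha : ∀ z ∈ ball x (dist x y / 4), u z = a) (hb : ∀ z ∈ ball y (dist x y / 4), u z = b) :
    |b - a| ≤ 2 * L * C ^ 4 * dist x y := by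
  set r := dist x y
  obtain ⟨hB0, hB⟩ := hP.1 x (2 * r) (by positivity)
  have hdoubling : ∀ z, ball x (2 * r) ⊆ ball z (2 ^ 4 * (r / 4)) →
      μ (ball x (2 * r)) ≤ ((C ^ 4 : ℝ≥0) : ℝ≥0∞) * μ (ball z (r / 4)) := fun z hz => by
    rw [ENNReal.coe_pow]
    exact (measure_mono hz).trans (hD.measure_ball_two_pow_mul_le z (by positivity) 4)
  obtain ⟨K, hK⟩ := hu
  calc |b - a|
      ≤ ((C ^ 4 : ℝ≥0) : ℝ) * ⨍ z in ball x (2 * r), |u z - ⨍ w in ball x (2 * r), u w ∂μ| ∂μ :=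
        abs_sub_le_mul_setAverage_abs_sub (hK.integrableOn_ball x hB.ne) measurableSet_ball
          measurableSet_ball (ball_subset_ball (by linarith))
          (ball_subset_ball' (by rw [dist_comm]; linarith)) (ball_disjoint_ball (by linarith))
          hB0.ne' hB.ne (hdoubling x (ball_subset_ball (by linarith)))
          (hdoubling y (ball_subset_ball' (by linarith))) ha hb
    _ ≤ C ^ 4 * (L * (2 * r)) := by
        push_cast
        gcongr
        exact hP.setAverage_abs_sub_le_of_lipLow_le_one hp hL ⟨K, hK⟩ hlip x (by positivity)
    _ = 2 * L * C ^ 4 * r := by ring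

end Poincare

/-- in a doubling `p`-Poincaré space, for every `ε > 0` there is an `ε`-path
of controlled length from `B(p₀, r/4)` to `B(q₀, r/4)`, where `r = d(p₀,q₀)`. -/
theorem exists_eps_path_joining_quarter_balls
    (Cμ : ℝ≥0) (L p : ℝ) (hL : 1 ≤ L) (hp : 1 ≤ p) :
    ∃ C : ℝ, 0 < C ∧
      ∀ (X : Type) [MetricSpace X] [MeasurableSpace X] [BorelSpace X] (μ : Measure X),
        DoublingWith μ Cμ → PoincareIneq μ p L →
        ∀ p₀ q₀ : X, 0 < dist p₀ q₀ → ∀ ε : ℝ, 0 < ε →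
          ∃ (k : ℕ) (pts : Fin (k + 1) → X),
            pts 0 ∈ Metric.ball p₀ (dist p₀ q₀ / 4) ∧
            pts (Fin.last k) ∈ Metric.ball q₀ (dist p₀ q₀ / 4) ∧
            (∀ i : Fin k, dist (pts i.castSucc) (pts i.succ) < ε) ∧
            (∑ i : Fin k, dist (pts i.castSucc) (pts i.succ)) ≤ C * dist p₀ q₀ := by
  have hLC : 0 ≤ 2 * L * (Cμ : ℝ) ^ 4 := by positivity
  refine ⟨2 * L * Cμ ^ 4 + 1, by linarith, ?_⟩
  intro X _ _ _ μ hD hP p₀ q₀ hr ε hε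
  set M := (2 * L * Cμ ^ 4 + 1) * dist p₀ q₀
  have hM : 0 ≤ M := by positivity
  set u := truncEpsPathDist ε (ball p₀ (dist p₀ q₀ / 4)) M
  obtain ⟨x, hx, hux⟩ : ∃ x ∈ ball q₀ (dist p₀ q₀ / 4), u x < M := by
    by_contra! hfar
    have h := hP.abs_sub_le_of_lipLow_le_one hD (by linarith) (by linarith)
      ⟨_, lipschitzWith_truncEpsPathDist hε hM⟩ (lipLow_truncEpsPathDist_le_one hε) hr
      (fun z hz => truncEpsPathDist_eq_zero hM hz)
      (fun z hz => le_antisymm (truncEpsPathDist_le z) (hfar z hz))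
    rw [sub_zero, abs_of_nonneg hM] at h
    linarith
  obtain ⟨k, pts, h0, rfl, hpath, hlen⟩ := exists_epsPath_of_truncEpsPathDist_lt hux
  exact ⟨k, pts, h0, hx, hpath, hlen.le⟩
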